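/- For a fixed integer K with 1 ≤ K < C, there exists λ ∈ [0,1] such that η̃_K(X) ≥ λ ≥ η̃_{K+1}(X) holds μ-almost everywhere if and only if the supports of η̃_K and η̃_{K+1} are disjoint: supp(η̃_K) ∩ supp(η̃_{K+1}) = ∅. -/

import Mathlib

open MeasureTheory Finset

/-- Error rate of a set-valued classifier: `ℰ(S) = ∫ (1 − ∑_{k∈S(x)} η_k(x)) dμ(x)`. -/
noncomputable def errRate {𝒳 : Type*} [MeasurableSpace 𝒳] (μ : Measure 𝒳) {C : ℕ}
    (η : 𝒳 → Fin C → ℝ) (S : 𝒳 → Finset (Fin C)) : ℝ :=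
  ∫ x, (1 - ∑ k ∈ S x, η x k) ∂μ

/-- Average set size of a set-valued classifier: `ℐ(S) = ∫ |S(x)| dμ(x)`. -/
noncomputable def avgSize {𝒳 : Type*} [MeasurableSpace 𝒳] (μ : Measure 𝒳) {C : ℕ}
    (S : 𝒳 → Finset (Fin C)) : ℝ :=
  ∫ x, ((S x).card : ℝ) ∂μ

/-- `G_η(λ) = ∑_{k=1}^C μ{x : η_k(x) > λ}`. -/
noncomputable def Gfun {𝒳 : Type*} [MeasurableSpace 𝒳] (μ : Measure 𝒳) {C : ℕ}
    (η : 𝒳 → Fin C → ℝ) (lam : ℝ) : ℝ :=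
  ∑ k : Fin C, (μ {x | lam < η x k}).toReal

/-- `λ_𝒦 = min {λ ∈ [0,1] : G_η(λ) ≤ 𝒦}` (as an infimum). -/
noncomputable def lamThresh {𝒳 : Type*} [MeasurableSpace 𝒳] (μ : Measure 𝒳) {C : ℕ}
    (η : 𝒳 → Fin C → ℝ) (K : ℝ) : ℝ :=
  sInf {lam : ℝ | lam ∈ Set.Icc (0 : ℝ) 1 ∧ Gfun μ η lam ≤ K}

/-- `𝒮_𝒦^+(x) = {k : η_k(x) > λ_𝒦}`. -/
noncomputable def Splus {𝒳 : Type*} [MeasurableSpace 𝒳] (μ : Measure 𝒳) {C : ℕ}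
    (η : 𝒳 → Fin C → ℝ) (K : ℝ) : 𝒳 → Finset (Fin C) :=
  fun x => Finset.univ.filter (fun k => lamThresh μ η K < η x k)

/-- The support of the distribution of `η̃_k`: the interior (in ℝ) of the set of `t ∈ [0,1]`
where the CDF `F_{η̃_k}(t) = μ{x : η̃_k(x) ≤ t}` lies strictly between 0 and 1. -/
noncomputable def rankSupport {𝒳 : Type*} [MeasurableSpace 𝒳] (μ : Measure 𝒳) {C : ℕ}
    (ηs : 𝒳 → Fin C → ℝ) (k : Fin C) : Set ℝ :=
  interior {t : ℝ | t ∈ Set.Icc (0 : ℝ) 1 ∧ 0 < μ {x | ηs x k ≤ t} ∧ μ {x | ηs x k ≤ t} < 1}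

open scoped ENNReal

/-- for `1 ≤ K < C`, there exists `λ ∈ [0,1]` with
`η̃_K(X) ≥ λ ≥ η̃_{K+1}(X)` μ-a.e. iff the supports of `η̃_K` and `η̃_{K+1}` are disjoint. -/
theorem stmt_6 {𝒳 : Type*} [MeasurableSpace 𝒳] (μ : Measure 𝒳) [IsProbabilityMeasure μ]
    {C : ℕ} (η : 𝒳 → Fin C → ℝ)
    (hη : ∀ k, Measurable fun x => η x k)
    (hη0 : ∀ x k, 0 ≤ η x k) (hη1 : ∀ x, ∑ k, η x k = 1)
    (K : ℕ) (hK1 : 1 ≤ K) (hKC : K < C)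
    -- the decreasing rearrangement of the conditional probabilities
    (ηs : 𝒳 → Fin C → ℝ)
    (hηs : ∀ x, ∃ σ : Equiv.Perm (Fin C), (∀ k, ηs x k = η x (σ k)) ∧
      ∀ i j : Fin C, i ≤ j → ηs x j ≤ ηs x i) :
    (∃ lam ∈ Set.Icc (0 : ℝ) 1,
        ∀ᵐ x ∂μ, ηs x ⟨K, hKC⟩ ≤ lam ∧ lam ≤ ηs x ⟨K - 1, by omega⟩)
      ↔ rankSupport μ ηs ⟨K - 1, by omega⟩ ∩ rankSupport μ ηs ⟨K, hKC⟩ = ∅ := by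
  have hK1C : K - 1 < C := by omega
  classical
  -- pointwise facts about ηs
  have h0 : ∀ x k, 0 ≤ ηs x k := by
    intro x k
    obtain ⟨σ, h1, -⟩ := hηs x
    rw [h1]; exact hη0 x _
  have h1' : ∀ x k, ηs x k ≤ 1 := by
    intro x k
    obtain ⟨σ, h1, -⟩ := hηs x
    rw [h1, ← hη1 x]
    exact Finset.single_le_sum (fun i _ => hη0 x i) (Finset.mem_univ _)
  have hab : ∀ x, ηs x ⟨K, hKC⟩ ≤ ηs x ⟨K - 1, hK1C⟩ := by
    intro x
    obtain ⟨σ, -, hmon⟩ := hηs x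
    exact hmon ⟨K - 1, hK1C⟩ ⟨K, hKC⟩ (by simp only [Fin.mk_le_mk]; omega)
  -- key set identity giving measurability
  have hkey : ∀ (k : Fin C) (t : ℝ), {x | ηs x k ≤ t}
      = {x | (Finset.univ.filter fun i => t < η x i).card ≤ (k : ℕ)} := by
    intro k t
    ext x
    obtain ⟨σ, h1, hmon⟩ := hηs x
    have hcard : (Finset.univ.filter fun i => t < η x i).card
        = (Finset.univ.filter fun j => t < ηs x j).card := by
      simp only [Finset.card_filter]
      rw [← Equiv.sum_comp σ fun i => if t < η x i then (1 : ℕ) else 0]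
      exact Finset.sum_congr rfl fun j _ => by rw [h1 j]
    simp only [Set.mem_setOf_eq, hcard]
    constructor
    · intro hle
      calc (Finset.univ.filter fun j => t < ηs x j).card
          ≤ (Finset.Iio k).card := by
            apply Finset.card_le_card
            intro j hj
            rw [Finset.mem_filter] at hj
            rw [Finset.mem_Iio]
            by_contra hk
            push_neg at hk
            exact absurd (le_trans (hmon k j hk) hle) (not_le.2 hj.2)
        _ = (k : ℕ) := Fin.card_Iio k
    · intro hle
      by_contra hlt
      push_neg at hlt
      have hsub : Finset.Iic k ⊆ Finset.univ.filter fun j => t < ηs x j := by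
        intro j hj
        rw [Finset.mem_Iic] at hj
        rw [Finset.mem_filter]
        exact ⟨Finset.mem_univ _, lt_of_lt_of_le hlt (hmon j k hj)⟩
      have hc := Finset.card_le_card hsub
      rw [Fin.card_Iic] at hc
      omega
  have hmeas : ∀ t : ℝ, MeasurableSet {x | ηs x ⟨K, hKC⟩ ≤ t} := by
    intro t
    rw [hkey]
    have hf : Measurable fun x => (Finset.univ.filter fun i => t < η x i).card := by
      simp only [Finset.card_filter]
      apply Finset.measurable_sum
      intro i _
      exact Measurable.ite (measurableSet_lt measurable_const (hη i))
        measurable_const measurable_const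
    exact hf (show MeasurableSet {n : ℕ | n ≤ ((⟨K, hKC⟩ : Fin C) : ℕ)} from
      (Set.to_countable _).measurableSet)
  constructor
  · -- forward: existence of lam implies disjoint supports
    rintro ⟨lam, hlam, hae⟩
    have hnull : μ {x | ¬(ηs x ⟨K, hKC⟩ ≤ lam ∧ lam ≤ ηs x ⟨K - 1, hK1C⟩)} = 0 :=
      ae_iff.mp hae
    have hA : μ {x | lam < ηs x ⟨K, hKC⟩} = 0 := by
      refine measure_mono_null ?_ hnull
      intro x hx
      simp only [Set.mem_setOf_eq] at hx ⊢
      exact fun h => absurd h.1 (not_le.2 hx)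
    have hB : μ {x | ηs x ⟨K - 1, hK1C⟩ < lam} = 0 := by
      refine measure_mono_null ?_ hnull
      intro x hx
      simp only [Set.mem_setOf_eq] at hx ⊢
      exact fun h => absurd h.2 (not_le.2 hx)
    have hFa : ∀ t, lam ≤ t → μ {x | ηs x ⟨K, hKC⟩ ≤ t} = 1 := by
      intro t ht
      refine le_antisymm prob_le_one ?_
      have hcover : (Set.univ : Set 𝒳)
          ⊆ {x | ηs x ⟨K, hKC⟩ ≤ t} ∪ {x | lam < ηs x ⟨K, hKC⟩} := by
        intro x _
        rcases le_or_gt (ηs x ⟨K, hKC⟩) t with h | h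
        · exact Or.inl h
        · exact Or.inr (lt_of_le_of_lt ht h)
      calc (1 : ℝ≥0∞) = μ Set.univ := measure_univ.symm
        _ ≤ μ ({x | ηs x ⟨K, hKC⟩ ≤ t} ∪ {x | lam < ηs x ⟨K, hKC⟩}) := measure_mono hcover
        _ ≤ μ {x | ηs x ⟨K, hKC⟩ ≤ t} + μ {x | lam < ηs x ⟨K, hKC⟩} := measure_union_le _ _
        _ = μ {x | ηs x ⟨K, hKC⟩ ≤ t} := by rw [hA, add_zero]
    rw [Set.eq_empty_iff_forall_notMem]
    rintro t ⟨htb, hta⟩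
    have htb' : t ∈ {t : ℝ | t ∈ Set.Icc (0:ℝ) 1 ∧ 0 < μ {x | ηs x ⟨K - 1, hK1C⟩ ≤ t}
        ∧ μ {x | ηs x ⟨K - 1, hK1C⟩ ≤ t} < 1} := interior_subset htb
    have hta' : t ∈ {t : ℝ | t ∈ Set.Icc (0:ℝ) 1 ∧ 0 < μ {x | ηs x ⟨K, hKC⟩ ≤ t}
        ∧ μ {x | ηs x ⟨K, hKC⟩ ≤ t} < 1} := interior_subset hta
    rcases lt_or_ge t lam with h | h
    · have hz : μ {x | ηs x ⟨K - 1, hK1C⟩ ≤ t} = 0 :=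
        measure_mono_null (fun x hx => lt_of_le_of_lt hx h) hB
      exact absurd htb'.2.1 (by rw [hz]; exact lt_irrefl 0)
    · have hone := hFa t h
      exact absurd hta'.2.2 (by rw [hone]; exact lt_irrefl 1)
  · -- backward: disjoint supports imply existence of lam
    intro hdisj
    set A : Set ℝ := {t | μ {x | ηs x ⟨K - 1, hK1C⟩ ≤ t} = 0} with hA_def
    have hAne : A.Nonempty := by
      refine ⟨-1, ?_⟩
      have he : {x | ηs x ⟨K - 1, hK1C⟩ ≤ (-1 : ℝ)} = ∅ := by
        ext x
        simp only [Set.mem_setOf_eq, Set.mem_empty_iff_false, iff_false, not_le]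
        linarith [h0 x ⟨K - 1, hK1C⟩]
      simp only [hA_def, Set.mem_setOf_eq, he, measure_empty]
    have hAub : ∀ t ∈ A, t < 1 := by
      intro t ht
      by_contra hge
      push_neg at hge
      have huniv : {x | ηs x ⟨K - 1, hK1C⟩ ≤ t} = Set.univ := by
        ext x
        simp only [Set.mem_setOf_eq, Set.mem_univ, iff_true]
        exact le_trans (h1' x _) hge
      simp only [hA_def, Set.mem_setOf_eq, huniv, measure_univ] at ht
      exact one_ne_zero ht
    have hAbdd : BddAbove A := ⟨1, fun t ht => le_of_lt (hAub t ht)⟩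
    set s' := sSup A with hs'
    have hs'le : s' ≤ 1 := csSup_le hAne fun t ht => le_of_lt (hAub t ht)
    have hs'0 : 0 ≤ s' := by
      by_contra hneg
      push_neg at hneg
      have hmem : s' / 2 ∈ A := by
        have he : {x | ηs x ⟨K - 1, hK1C⟩ ≤ s' / 2} = ∅ := by
          ext x
          simp only [Set.mem_setOf_eq, Set.mem_empty_iff_false, iff_false, not_le]
          have := h0 x ⟨K - 1, hK1C⟩
          linarith
        simp only [hA_def, Set.mem_setOf_eq, he, measure_empty]
      have := le_csSup hAbdd hmem
      rw [← hs'] at this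
      linarith
    have hBlt : μ {x | ηs x ⟨K - 1, hK1C⟩ < s'} = 0 := by
      have hz : ∀ n : ℕ, μ {x | ηs x ⟨K - 1, hK1C⟩ ≤ s' - 1 / (n + 1)} = 0 := by
        intro n
        have hlt : s' - 1 / ((n : ℝ) + 1) < s' := by
          have : (0 : ℝ) < 1 / ((n : ℝ) + 1) := by positivity
          linarith
        obtain ⟨t, htA, htgt⟩ := exists_lt_of_lt_csSup hAne hlt
        exact measure_mono_null (fun x hx => le_trans hx (le_of_lt htgt)) htA
      have h0u : μ (⋃ n : ℕ, {x | ηs x ⟨K - 1, hK1C⟩ ≤ s' - 1 / (n + 1)}) = 0 := by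
        refine le_antisymm (le_trans (measure_iUnion_le _) ?_) zero_le
        simp only [hz, tsum_zero, le_refl]
      refine measure_mono_null ?_ h0u
      intro x hx
      simp only [Set.mem_setOf_eq] at hx
      obtain ⟨n, hn⟩ := exists_nat_one_div_lt (sub_pos.2 hx)
      exact Set.mem_iUnion.2 ⟨n, by simp only [Set.mem_setOf_eq]; linarith⟩
    set B' : Set ℝ := {t | μ {x | t < ηs x ⟨K, hKC⟩} = 0} with hB'_def
    have hB'ne : (1 : ℝ) ∈ B' := by
      have he : {x | (1 : ℝ) < ηs x ⟨K, hKC⟩} = ∅ := by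
        ext x
        simp only [Set.mem_setOf_eq, Set.mem_empty_iff_false, iff_false, not_lt]
        exact h1' x _
      simp only [hB'_def, Set.mem_setOf_eq, he, measure_empty]
    have hB'lb : ∀ t ∈ B', 0 ≤ t := by
      intro t ht
      by_contra hneg
      push_neg at hneg
      have huniv : {x | t < ηs x ⟨K, hKC⟩} = Set.univ := by
        ext x
        simp only [Set.mem_setOf_eq, Set.mem_univ, iff_true]
        exact lt_of_lt_of_le hneg (h0 x _)
      simp only [hB'_def, Set.mem_setOf_eq, huniv, measure_univ] at ht
      exact one_ne_zero ht
    have hB'bdd : BddBelow B' := ⟨0, hB'lb⟩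
    set r := sInf B' with hr
    have hr0 : 0 ≤ r := le_csInf ⟨1, hB'ne⟩ hB'lb
    have hr1 : r ≤ 1 := csInf_le hB'bdd hB'ne
    have hAr : μ {x | r < ηs x ⟨K, hKC⟩} = 0 := by
      have hz : ∀ n : ℕ, μ {x | r + 1 / (n + 1) < ηs x ⟨K, hKC⟩} = 0 := by
        intro n
        have hlt : r < r + 1 / ((n : ℝ) + 1) := by
          have : (0 : ℝ) < 1 / ((n : ℝ) + 1) := by positivity
          linarith
        obtain ⟨t, htB, htlt⟩ := exists_lt_of_csInf_lt ⟨1, hB'ne⟩ hlt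
        exact measure_mono_null (fun x hx => lt_trans htlt hx) htB
      have h0u : μ (⋃ n : ℕ, {x | r + 1 / (n + 1) < ηs x ⟨K, hKC⟩}) = 0 := by
        refine le_antisymm (le_trans (measure_iUnion_le _) ?_) zero_le
        simp only [hz, tsum_zero, le_refl]
      refine measure_mono_null ?_ h0u
      intro x hx
      simp only [Set.mem_setOf_eq] at hx
      obtain ⟨n, hn⟩ := exists_nat_one_div_lt (sub_pos.2 hx)
      exact Set.mem_iUnion.2 ⟨n, by simp only [Set.mem_setOf_eq]; linarith⟩
    rcases le_or_gt r s' with hrs | hrs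
    · -- lam = r works
      refine ⟨r, ⟨hr0, hr1⟩, ?_⟩
      rw [ae_iff]
      have hb0 : μ {x | ηs x ⟨K - 1, hK1C⟩ < r} = 0 :=
        measure_mono_null (fun x hx => lt_of_lt_of_le hx hrs) hBlt
      have hu : μ ({x | r < ηs x ⟨K, hKC⟩} ∪ {x | ηs x ⟨K - 1, hK1C⟩ < r}) = 0 :=
        measure_union_null hAr hb0
      refine measure_mono_null ?_ hu
      intro x hx
      simp only [Set.mem_setOf_eq, not_and_or, not_le] at hx
      exact hx
    · -- otherwise the supports intersect, contradiction
      exfalso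
      have hIcc : ∀ t ∈ Set.Ioo s' r, t ∈ Set.Icc (0 : ℝ) 1 := fun t ht =>
        ⟨le_of_lt (lt_of_le_of_lt hs'0 ht.1), le_of_lt (lt_of_lt_of_le ht.2 hr1)⟩
      have hbpos : ∀ t ∈ Set.Ioo s' r, 0 < μ {x | ηs x ⟨K - 1, hK1C⟩ ≤ t} := by
        intro t ht
        rw [pos_iff_ne_zero]
        intro hz
        exact absurd (le_csSup hAbdd hz) (not_le.2 ht.1)
      have halt1 : ∀ t ∈ Set.Ioo s' r, μ {x | ηs x ⟨K, hKC⟩ ≤ t} < 1 := by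
        intro t ht
        have hne : μ {x | t < ηs x ⟨K, hKC⟩} ≠ 0 := by
          intro hz
          exact absurd (csInf_le hB'bdd hz) (not_le.2 ht.2)
        have hsum := measure_add_measure_compl (μ := μ) (hmeas t)
        have hcompl : {x | ηs x ⟨K, hKC⟩ ≤ t}ᶜ = {x | t < ηs x ⟨K, hKC⟩} := by
          ext x
          simp [not_le]
        rw [hcompl, measure_univ] at hsum
        refine lt_of_le_of_ne prob_le_one ?_
        intro h1e
        rw [h1e] at hsum
        have hsum' : (1 : ℝ≥0∞) + μ {x | t < ηs x ⟨K, hKC⟩} = 1 + 0 := by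
          rw [add_zero]; exact hsum
        exact hne ((ENNReal.add_right_inj ENNReal.one_ne_top).mp hsum')
      have hbb_lt1 : ∀ t ∈ Set.Ioo s' r, μ {x | ηs x ⟨K - 1, hK1C⟩ ≤ t} < 1 := by
        intro t ht
        refine lt_of_le_of_lt (measure_mono ?_) (halt1 t ht)
        intro x hx
        exact le_trans (hab x) hx
      have hapos : ∀ t ∈ Set.Ioo s' r, 0 < μ {x | ηs x ⟨K, hKC⟩ ≤ t} := by
        intro t ht
        refine lt_of_lt_of_le (hbpos t ht) (measure_mono ?_)
        intro x hx
        exact le_trans (hab x) hx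
      have hsubB : Set.Ioo s' r ⊆ {t : ℝ | t ∈ Set.Icc (0 : ℝ) 1
          ∧ 0 < μ {x | ηs x ⟨K - 1, hK1C⟩ ≤ t} ∧ μ {x | ηs x ⟨K - 1, hK1C⟩ ≤ t} < 1} :=
        fun t ht => ⟨hIcc t ht, hbpos t ht, hbb_lt1 t ht⟩
      have hsubA : Set.Ioo s' r ⊆ {t : ℝ | t ∈ Set.Icc (0 : ℝ) 1
          ∧ 0 < μ {x | ηs x ⟨K, hKC⟩ ≤ t} ∧ μ {x | ηs x ⟨K, hKC⟩ ≤ t} < 1} :=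
        fun t ht => ⟨hIcc t ht, hapos t ht, halt1 t ht⟩
      have ht0 : (s' + r) / 2 ∈ Set.Ioo s' r := ⟨by linarith, by linarith⟩
      have hm : (s' + r) / 2 ∈ rankSupport μ ηs ⟨K - 1, hK1C⟩ ∩ rankSupport μ ηs ⟨K, hKC⟩ :=
        ⟨interior_maximal hsubB isOpen_Ioo ht0, interior_maximal hsubA isOpen_Ioo ht0⟩
      exact Set.eq_empty_iff_forall_notMem.mp hdisj _ hm
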